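/- With vertices of C_n labeled 1, 2, ..., n so that consecutive integers are adjacent and n is adjacent to 1, the word w' = n 1 (n−1) n (n−2)(n−1) (n−3)(n−2) ⋯ 4 5 3 4 2 3 (in which the first letters of successive pairs form the decreasing sequence n, n−1, ..., 2 and the second letters form the sequence 1, n, n−1, ..., 3) has length 2n − 2 and word-represents the cycle graph C_n for every n ≥ 4. -/

import Mathlib

variable {V : Type*}

/-- The restriction of a word `w` to the letters `x` and `y`. -/
def restrictWord [DecidableEq V] (w : List V) (x y : V) : List V :=
  w.filter fun z => decide (z = x ∨ z = y)

/-- `x` and `y` alternate in `w`: the restriction of `w` to `{x, y}` has no two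
consecutive equal letters. -/
def Alternates [DecidableEq V] (w : List V) (x y : V) : Prop :=
  (restrictWord w x y).Chain' (· ≠ ·)

/-- `w` word-represents the simple graph `G`: every vertex occurs in `w`, and two distinct
vertices are adjacent iff they alternate in `w`. -/
def Represents [DecidableEq V] (G : SimpleGraph V) (w : List V) : Prop :=
  (∀ v : V, v ∈ w) ∧ ∀ x y : V, x ≠ y → (G.Adj x y ↔ Alternates w x y)

/-- `ℓ(G)`: the minimal length of a word-representant of `G`. -/
noncomputable def minRepLength [DecidableEq V] (G : SimpleGraph V) : ℕ :=
  sInf {n | ∃ w : List V, Represents G w ∧ w.length = n}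

/-- The cycle graph `C_n` on vertex set `Fin n`, with an edge between `i` and `i + 1`
(indices modulo `n`); vertex `i : Fin n` corresponds to the vertex labeled `i` for
`1 ≤ i ≤ n - 1`, and vertex `0` corresponds to the vertex labeled `n`. -/
def cycleGraph (n : ℕ) : SimpleGraph (Fin n) :=
  SimpleGraph.fromRel fun i j => (i.val + 1) % n = j.val

/-- The word `w' = n 1 (n−1) n (n−2)(n−1) (n−3)(n−2) ⋯ 4 5 3 4 2 3`: the concatenation of
the `n − 1` pairs whose first letters form the decreasing sequence `n, n−1, …, 2` and whose
second letters form the sequence `1, n, n−1, …, 3`, written over the alphabet `Fin n` via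
the labeling `m ↦ m % n` (so the label `n` becomes the vertex `0`). -/
def cycleWord (n : ℕ) (hn : 0 < n) : List (Fin n) :=
  (List.ofFn fun j : Fin (n - 1) =>
    ([⟨(n - j.val) % n, Nat.mod_lt _ hn⟩,
      ⟨(if j.val = 0 then 1 else n - j.val + 1) % n, Nat.mod_lt _ hn⟩] : List (Fin n))).flatten

/-! Write `p_k = k + 2 (mod n)`, so that `p_0, …, p_{n-1}` is the Hamiltonian path
`2, 3, …, n, 1` of `C_n`; then `w'` lists the edges `p_{k-1} p_k` of this path from its end,
`k = n - 1, …, 1`. In such a word over a path `p_0, …, p_m`, the restriction to `{p_i, p_j}`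
with `i < j` is `(p_j) p_i p_j (p_i)` if `j = i + 1` and `(p_j) p_j p_i (p_i)` otherwise, the
bracketed letters being present unless `j = m`, resp. `i = 0`. So exactly the path edges and
the pair of endpoints alternate, which closes the path into the cycle. -/

section RestrictWord

variable [DecidableEq V]

lemma restrictWord_comm (w : List V) (x y : V) : restrictWord w x y = restrictWord w y x := by
  simp only [restrictWord, or_comm]

lemma alternates_comm (w : List V) (x y : V) : Alternates w x y ↔ Alternates w y x := by
  rw [Alternates, Alternates, restrictWord_comm]

lemma restrictWord_append (u v : List V) (x y : V) :
    restrictWord (u ++ v) x y = restrictWord u x y ++ restrictWord v x y :=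
  List.filter_append u v

lemma restrictWord_pair (u v x y : V) :
    restrictWord [u, v] x y =
      (if u = x ∨ u = y then [u] else []) ++ (if v = x ∨ v = y then [v] else []) := by
  unfold restrictWord
  split_ifs <;> simp_all

lemma restrictWord_eq_nil {w : List V} {x y : V} (hx : x ∉ w) (hy : y ∉ w) :
    restrictWord w x y = [] :=
  List.filter_eq_nil_iff.mpr fun z hz => by
    simpa using ⟨ne_of_mem_of_not_mem hz hx, ne_of_mem_of_not_mem hz hy⟩

end RestrictWord

def pathWord (f : ℕ → V) : ℕ → List V
  | 0 => []
  | m + 1 => [f m, f (m + 1)] ++ pathWord f m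

lemma pathWord_eq_flatten_ofFn (f : ℕ → V) (m : ℕ) :
    pathWord f m = (List.ofFn fun j : Fin m => [f (m - 1 - j), f (m - j)]).flatten := by
  induction m with
  | zero => rfl
  | succ m ih =>
    rw [pathWord, ih, List.ofFn_succ, List.flatten_cons]
    congr 3; simp [Nat.sub_sub, Nat.add_comm 1]

lemma length_pathWord (f : ℕ → V) (m : ℕ) : (pathWord f m).length = 2 * m := by
  induction m with
  | zero => rfl
  | succ m ih =>
    simp only [pathWord, List.length_append, List.length_cons, List.length_nil, ih]
    omega

lemma apply_mem_pathWord (f : ℕ → V) {m k : ℕ} (hm : 1 ≤ m) (hk : k ≤ m) :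
    f k ∈ pathWord f m := by
  induction m with
  | zero => omega
  | succ m ih =>
    rw [pathWord, List.mem_append]
    rcases Nat.lt_or_ge k m with hkm | hkm
    · exact Or.inr (ih (by omega) hkm.le)
    · obtain rfl | rfl : k = m ∨ k = m + 1 := by omega
      all_goals simp

lemma exists_of_mem_pathWord {f : ℕ → V} {m : ℕ} {x : V} (hx : x ∈ pathWord f m) :
    ∃ k ≤ m, f k = x := by
  induction m with
  | zero => simp [pathWord] at hx
  | succ m ih =>
    simp only [pathWord, List.cons_append, List.nil_append, List.mem_cons] at hx
    rcases hx with rfl | rfl | hx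
    · exact ⟨m, by omega, rfl⟩
    · exact ⟨m + 1, le_rfl, rfl⟩
    · obtain ⟨k, hk, rfl⟩ := ih hx
      exact ⟨k, by omega, rfl⟩

lemma apply_not_mem_pathWord {f : ℕ → V} {m : ℕ} (hf : Set.InjOn f (Set.Iic (m + 1))) :
    f (m + 1) ∉ pathWord f m :=
  fun h => by
    obtain ⟨k, hk, hfk⟩ := exists_of_mem_pathWord h
    have := hf (Set.mem_Iic.mpr (by omega : k ≤ m + 1)) (Set.mem_Iic.mpr le_rfl) hfk
    omega

section PathWordAlternation

variable [DecidableEq V] {f : ℕ → V} {m : ℕ}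

lemma restrictWord_pathWord_of_not_mem (hf : Set.InjOn f (Set.Iic m)) {x : V}
    (hx : ∀ i ≤ m, f i ≠ x) {k : ℕ} (hk : k ≤ m) :
    restrictWord (pathWord f m) x (f k) =
      (if k < m then [f k] else []) ++ (if 0 < k then [f k] else []) := by
  induction m with
  | zero =>
    obtain rfl : k = 0 := by omega
    rfl
  | succ m ih =>
    have hfm : Set.InjOn f (Set.Iic m) := hf.mono (Set.Iic_subset_Iic.mpr m.le_succ)
    have hinj : ∀ {a b}, a ≤ m + 1 → b ≤ m + 1 → (f a = f b ↔ a = b) := fun ha hb =>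
      hf.eq_iff (Set.mem_Iic.mpr ha) (Set.mem_Iic.mpr hb)
    rw [pathWord, restrictWord_append, restrictWord_pair]
    rcases Nat.lt_or_ge k (m + 1) with hkm | hkm
    · rw [ih hfm (fun i hi => hx i (by omega)) (by omega)]
      simp only [hx m (by omega), hx (m + 1) le_rfl, hinj (by omega : m ≤ m + 1) hk,
        hinj le_rfl hk, false_or]
      rcases Nat.lt_or_ge k m with hk' | hk'
      · simp [hk', hk'.ne', hkm, show m + 1 ≠ k by omega]
      · obtain rfl : k = m := by omega
        simp
    · obtain rfl : k = m + 1 := by omega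
      rw [restrictWord_eq_nil (fun h => ?_) (apply_not_mem_pathWord hf)]
      · simp [hx m (by omega), hinj (by omega : m ≤ m + 1) le_rfl]
      · obtain ⟨i, hi, rfl⟩ := exists_of_mem_pathWord h
        exact hx i (by omega) rfl

lemma restrictWord_pathWord (hf : Set.InjOn f (Set.Iic m)) {i j : ℕ} (hij : i < j)
    (hj : j ≤ m) :
    restrictWord (pathWord f m) (f i) (f j) =
      (if j < m then [f j] else []) ++
        (if j = i + 1 then [f i, f j] else [f j, f i]) ++
        (if 0 < i then [f i] else []) := by
  induction m with
  | zero => omega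
  | succ m ih =>
    have hfm : Set.InjOn f (Set.Iic m) := hf.mono (Set.Iic_subset_Iic.mpr m.le_succ)
    have hinj : ∀ {a b}, a ≤ m + 1 → b ≤ m + 1 → (f a = f b ↔ a = b) := fun ha hb =>
      hf.eq_iff (Set.mem_Iic.mpr ha) (Set.mem_Iic.mpr hb)
    rw [pathWord, restrictWord_append, restrictWord_pair]
    rcases Nat.lt_or_ge j (m + 1) with hjm | hjm
    · rw [ih hfm (by omega)]
      simp only [hinj (by omega : m ≤ m + 1) (by omega : i ≤ m + 1),
        hinj (by omega : m ≤ m + 1) hj, hinj le_rfl (by omega : i ≤ m + 1), hinj le_rfl hj]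
      rcases Nat.lt_or_ge j m with hj' | hj'
      · simp [hj', hj'.ne', hjm, show m ≠ i by omega, show m + 1 ≠ i by omega,
          show m + 1 ≠ j by omega]
      · obtain rfl : j = m := by omega
        simp [hij.ne', show j + 1 ≠ i by omega]
    · obtain rfl : j = m + 1 := by omega
      rw [restrictWord_comm, restrictWord_pathWord_of_not_mem hfm
        (fun k hk => (hinj (by omega) le_rfl).not.mpr (by omega)) (by omega : i ≤ m)]
      simp only [hinj (by omega : m ≤ m + 1) (by omega : i ≤ m + 1),
        hinj (by omega : m ≤ m + 1) le_rfl, hinj le_rfl (by omega : i ≤ m + 1)]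
      rcases Nat.lt_or_ge i m with hi | hi
      · simp [hi, hi.ne', show m + 1 ≠ i by omega]
      · obtain rfl : i = m := by omega
        simp

lemma alternates_pathWord_iff (hf : Set.InjOn f (Set.Iic m)) {i j : ℕ} (hij : i < j)
    (hj : j ≤ m) : Alternates (pathWord f m) (f i) (f j) ↔ j = i + 1 ∨ (i = 0 ∧ j = m) := by
  have hne : f i ≠ f j := (hf.eq_iff (Set.mem_Iic.mpr (by omega)) (Set.mem_Iic.mpr hj)).not.mpr
    hij.ne
  rw [Alternates, restrictWord_pathWord hf hij hj]
  change List.IsChain _ _ ↔ _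
  split_ifs <;> simp [hne, hne.symm] <;> omega

lemma represents_pathWord (G : SimpleGraph V) (hm : 1 ≤ m) (hf : Set.InjOn f (Set.Iic m))
    (hsurj : ∀ v, ∃ k ≤ m, f k = v)
    (hadj : ∀ {i j}, i < j → j ≤ m → (G.Adj (f i) (f j) ↔ j = i + 1 ∨ (i = 0 ∧ j = m))) :
    Represents G (pathWord f m) := by
  refine ⟨fun v => ?_, fun x y hxy => ?_⟩
  · obtain ⟨k, hk, rfl⟩ := hsurj v
    exact apply_mem_pathWord f hm hk
  · obtain ⟨i, hi, rfl⟩ := hsurj x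
    obtain ⟨j, hj, rfl⟩ := hsurj y
    rcases lt_trichotomy i j with h | rfl | h
    · rw [hadj h hj, alternates_pathWord_iff hf h hj]
    · exact absurd rfl hxy
    · rw [G.adj_comm, alternates_comm, hadj h hi, alternates_pathWord_iff hf h hi]

end PathWordAlternation

def cyclePath (n : ℕ) (hn : 0 < n) (k : ℕ) : Fin n :=
  ⟨(k + 2) % n, Nat.mod_lt _ hn⟩

section CyclePath

variable {n : ℕ} (hn : 0 < n)

lemma cycleWord_eq_pathWord : cycleWord n hn = pathWord (cyclePath n hn) (n - 1) := by
  rw [pathWord_eq_flatten_ofFn, cycleWord]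
  congr 2
  funext j
  have hj := j.isLt
  simp only [cyclePath, List.cons.injEq, Fin.ext_iff, and_true]
  constructor
  · congr 1; omega
  · split_ifs with h
    · rw [h, show n - 1 - 0 + 2 = 1 + n by omega, Nat.add_mod_right]
    · congr 1; omega

lemma val_cyclePath_add_one_mod (k : ℕ) :
    ((cyclePath n hn k).val + 1) % n = (cyclePath n hn (k + 1)).val := by
  simp [cyclePath, Nat.add_right_comm k 1 2]

lemma cyclePath_self : cyclePath n hn n = cyclePath n hn 0 :=
  Fin.ext (by simp [cyclePath])

lemma cyclePath_injOn : Set.InjOn (cyclePath n hn) (Set.Iic (n - 1)) := by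
  intro a ha b hb hab
  have hmod : a ≡ b [MOD n] := Nat.ModEq.add_right_cancel' 2 (Fin.ext_iff.mp hab)
  rwa [Nat.ModEq, Nat.mod_eq_of_lt (by simp at ha; omega),
    Nat.mod_eq_of_lt (by simp at hb; omega)] at hmod

lemma exists_cyclePath_eq (v : Fin n) : ∃ k ≤ n - 1, cyclePath n hn k = v := by
  have hv := v.isLt
  rcases Nat.lt_or_ge v.val 2 with hv2 | hv2
  · refine ⟨v + n - 2, by omega, Fin.ext ?_⟩
    change (v + n - 2 + 2) % n = v
    rcases Nat.lt_or_ge n 2 with hn2 | hn2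
    · obtain rfl : n = 1 := by omega
      omega
    · rw [show v + n - 2 + 2 = v + n by omega, Nat.add_mod_right, Nat.mod_eq_of_lt hv]
  · refine ⟨v - 2, by omega, Fin.ext ?_⟩
    change (v - 2 + 2) % n = v
    rw [Nat.sub_add_cancel hv2, Nat.mod_eq_of_lt hv]

lemma cycleGraph_adj_cyclePath {i j : ℕ} (hij : i < j) (hj : j ≤ n - 1) :
    (cycleGraph n).Adj (cyclePath n hn i) (cyclePath n hn j) ↔
      j = i + 1 ∨ (i = 0 ∧ j = n - 1) := by
  have hinj : ∀ {a b}, a ≤ n - 1 → b ≤ n - 1 →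
      (cyclePath n hn a = cyclePath n hn b ↔ a = b) := fun ha hb =>
    (cyclePath_injOn hn).eq_iff (Set.mem_Iic.mpr ha) (Set.mem_Iic.mpr hb)
  rw [cycleGraph, SimpleGraph.fromRel_adj, ne_eq, val_cyclePath_add_one_mod,
    val_cyclePath_add_one_mod, ← Fin.ext_iff, ← Fin.ext_iff, hinj (by omega) hj,
    hinj (by omega) hj]
  rcases Nat.lt_or_ge (j + 1) n with hjn | hjn
  · rw [hinj (by omega) (by omega)]
    omega
  · obtain rfl : n = j + 1 := by omega
    rw [cyclePath_self, hinj (by omega) (by omega)]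
    omega

end CyclePath

/-- For every `n ≥ 4`, the word
`w' = n 1 (n−1) n (n−2)(n−1) (n−3)(n−2) ⋯ 4 5 3 4 2 3` has length `2n − 2` and
word-represents the cycle graph `C_n`. -/
theorem cycle_explicit_word (n : ℕ) (hn : 4 ≤ n) :
    (cycleWord n (by omega)).length = 2 * n - 2 ∧
    Represents (cycleGraph n) (cycleWord n (by omega)) := by
  have hn₀ : 0 < n := by omega
  rw [cycleWord_eq_pathWord hn₀, length_pathWord]
  exact ⟨by omega, represents_pathWord _ (by omega) (cyclePath_injOn hn₀)
    (exists_cyclePath_eq hn₀) (cycleGraph_adj_cyclePath hn₀)⟩
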